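/- arXiv:math/0511125 — 3 statements merged into one kernel-verified Lean document; each statement's English description precedes it below -/
import Mathlib

section
/- In the setting of Case A (n = 1): let G, F : cl(Δ)×M → ℂ be C¹, holomorphic in ζ on Δ for each t, with G (2,2)-regular and F = f ∘ G on bΣ = ∂Δ×M for a C¹ function f on Ω = G(bΣ). Define J(ζ,t) = iζ(∂_ζF ∂_tG − ∂_ζG ∂_tF) on cl(Δ)×M, so that J equals the Jacobian ∂(F,G)/∂(ψ,t) on bΣ. Then: (1) J(0,t) = 0 for all t ∈ M; (2) the zero set J⁻¹(0) ∩ bΣ contains the critical set Crit(G) = {det[∇G, ∇Ḡ] = 0} ⊂ bΣ; (3) at every point of bΣ where J ≠ 0, one has J/J̄ = σ ∘ G with σ = −(∂̄f)/conj(∂̄f). -/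
/-!
STATEMENT 11: In the setting of Case A (n = 1): let G, F : cl(Δ)×M → ℂ be C¹, holomorphic
in ζ on Δ for each t, with G (2,2)-regular and F = f ∘ G on bΣ = ∂Δ×M for a C¹ function f
on Ω = G(bΣ).  Define J(ζ,t) = iζ(∂_ζF ∂_tG − ∂_ζG ∂_tF) on cl(Δ)×M, so that J equals the
Jacobian ∂(F,G)/∂(ψ,t) on bΣ.  Then:
(1) J(0,t) = 0 for all t ∈ M;
(2) the zero set J⁻¹(0) ∩ bΣ contains the critical set Crit(G) = {det[∇G,∇Ḡ] = 0} ⊂ bΣ;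
(3) at every point of bΣ where J ≠ 0, one has J/J̄ = σ ∘ G with σ = −(∂̄f)/conj(∂̄f).
(M = S¹ or [0,1] is described by the real local coordinate t; ψ is the angular coordinate
on ∂Δ, ζ = e^{iψ}, and ∇ = (∂_ψ, ∂_t).)
-/

noncomputable section

/-- Restriction of a function on `cl(Δ) × M` to `bΣ = ∂Δ × M`, in coordinates `(ψ, t)`. -/
def bmap (u : ℂ × ℝ → ℂ) : ℝ × ℝ → ℂ :=
  fun p => u (Complex.exp (p.1 * Complex.I), p.2)

/-- `∂_ψ` on `bΣ`. -/
def Dpsi (u : ℝ × ℝ → ℂ) (p : ℝ × ℝ) : ℂ := fderiv ℝ u p (1, 0)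

/-- `∂_t` on `bΣ`. -/
def Dt (u : ℝ × ℝ → ℂ) (p : ℝ × ℝ) : ℂ := fderiv ℝ u p (0, 1)

/-- `det[∇u, ∇v] = (∂_ψ u)(∂_t v) − (∂_t u)(∂_ψ v)`. -/
def det2 (u v : ℝ × ℝ → ℂ) (p : ℝ × ℝ) : ℂ :=
  Dpsi u p * Dt v p - Dt u p * Dpsi v p

/-- Wirtinger derivative `∂̄f = ½(∂ₓ + i∂_y)f`. -/
def wirDzbar (f : ℂ → ℂ) (z : ℂ) : ℂ :=
  (fderiv ℝ f z 1 + Complex.I * fderiv ℝ f z Complex.I) / 2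

/-- The function `J(ζ,t) = iζ(∂_ζF ∂_tG − ∂_ζG ∂_tF)` (the complex derivative `∂_ζ` being
realized as the real directional derivative in the direction `1`, and `∂_t` as the
directional derivative in the direction `(0,1)`). -/
def Jfun (F G : ℂ × ℝ → ℂ) (p : ℂ × ℝ) : ℂ :=
  Complex.I * p.1 *
    (fderiv ℝ F p (1, 0) * fderiv ℝ G p (0, 1) - fderiv ℝ G p (1, 0) * fderiv ℝ F p (0, 1))

/-- `(2,2)`-regularity of `G : cl(Δ) × M → ℂ` (in the coordinates `(ζ, t)`):
`rank dG = 2` on `Σ = Δ × M`; on `bΣ` the rank of `G|_{bΣ}` is `2` away from the critical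
set `Crit(G) = {det[∇G,∇Ḡ] = 0}` (which is automatic), the rank is exactly `1` on
`Crit(G)`, and `G(Crit(G))` is contained in the boundary of `Ω = G(bΣ)`. -/
def Reg22 (G : ℂ × ℝ → ℂ) : Prop :=
  (∀ p : ℂ × ℝ, p.1 ∈ Metric.ball (0 : ℂ) 1 → Function.Surjective (fderiv ℝ G p)) ∧
  (∀ p : ℝ × ℝ, det2 (bmap G) (fun q => (starRingEnd ℂ) (bmap G q)) p = 0 →
    fderiv ℝ (bmap G) p ≠ 0 ∧ bmap G p ∈ frontier (Set.range (bmap G)))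


/-!
On `bΣ` the differentials of `F` and `G` are still `ℂ`-linear in the `ζ`-direction (by
continuity from `Δ`), so there `∂_ψ = iζ ∂_ζ` and `J` is the Jacobian `det[∇F, ∇G]`. Since
`F = f ∘ G` on `bΣ`, the Wirtinger splitting `df = ∂f dz + ∂̄f dz̄` turns this Jacobian into
`J = −(∂̄f ∘ G) · det[∇G, ∇Ḡ]`. The determinant `det[∇G, ∇Ḡ]` is purely imaginary, so it cancels
in `J / J̄` and leaves `−∂̄f / conj(∂̄f)`; its vanishing forces `J = 0`.
-/

open ComplexConjugate

section HolomorphicInFirstVariable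

variable {E F : Type*} [NormedAddCommGroup E] [NormedSpace ℝ E]
  [NormedAddCommGroup F] [NormedSpace ℂ F]

theorem fderiv_apply_inl_eq_smul {u : ℂ × E → F} {z : ℂ} {t : E}
    (hu : DifferentiableAt ℝ u (z, t)) (hz : DifferentiableAt ℂ (fun x => u (x, t)) z)
    (w : ℂ) : fderiv ℝ u (z, t) (w, 0) = w • fderiv ℝ u (z, t) (1, 0) := by
  have hslice : ∀ v : ℂ, fderiv ℝ u (z, t) (v, 0) = fderiv ℂ (fun x => u (x, t)) z v := by
    intro v
    have h := (hu.hasFDerivAt.comp z (hasFDerivAt_prodMk_left z t)).unique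
      (hz.hasFDerivAt.restrictScalars ℝ)
    exact congrArg (· v) h
  rw [hslice, hslice, ← map_smul, smul_eq_mul, mul_one]

theorem fderiv_apply_inl_eq_smul_of_mem_closure {u : ℂ × E → F} {U : Set ℂ} (hU : IsOpen U)
    (hu : ContDiff ℝ 1 u) (hhol : ∀ t, DifferentiableOn ℂ (fun z => u (z, t)) U)
    {z : ℂ} (hz : z ∈ closure U) (t : E) (w : ℂ) :
    fderiv ℝ u (z, t) (w, 0) = w • fderiv ℝ u (z, t) (1, 0) := by
  have hinterior : Set.EqOn (fun q => fderiv ℝ u q (w, 0)) (fun q => w • fderiv ℝ u q (1, 0))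
      (U ×ˢ Set.univ) := by
    rintro ⟨ζ, s⟩ ⟨hζ, -⟩
    exact fderiv_apply_inl_eq_smul (hu.differentiable one_ne_zero _)
      ((hhol s).differentiableAt (hU.mem_nhds hζ)) w
  refine hinterior.closure (by fun_prop) (by fun_prop) ?_
  rw [closure_prod_eq, closure_univ]
  exact ⟨hz, Set.mem_univ t⟩

end HolomorphicInFirstVariable

section BoundaryChart

theorem hasFDerivAt_boundaryChart (p : ℝ × ℝ) :
    HasFDerivAt (fun q : ℝ × ℝ => (Complex.exp (q.1 * Complex.I), q.2))
      ((Complex.exp (p.1 * Complex.I) • Complex.I •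
          Complex.ofRealCLM.comp (ContinuousLinearMap.fst ℝ ℝ ℝ)).prod
        (ContinuousLinearMap.snd ℝ ℝ ℝ)) p := by
  have hψ : HasFDerivAt (fun q : ℝ × ℝ => (q.1 : ℂ) * Complex.I)
      (Complex.I • Complex.ofRealCLM.comp (ContinuousLinearMap.fst ℝ ℝ ℝ)) p :=
    (Complex.ofRealCLM.hasFDerivAt.comp p hasFDerivAt_fst).mul_const Complex.I
  exact ((Complex.hasDerivAt_exp _).comp_hasFDerivAt p hψ).prodMk hasFDerivAt_snd

variable {u : ℂ × ℝ → ℂ} {p : ℝ × ℝ}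

theorem differentiableAt_bmap (hu : DifferentiableAt ℝ u (Complex.exp (p.1 * Complex.I), p.2)) :
    DifferentiableAt ℝ (bmap u) p :=
  (hu.hasFDerivAt.comp p (hasFDerivAt_boundaryChart p)).differentiableAt

theorem fderiv_bmap_apply (hu : DifferentiableAt ℝ u (Complex.exp (p.1 * Complex.I), p.2))
    (v : ℝ × ℝ) :
    fderiv ℝ (bmap u) p v = fderiv ℝ u (Complex.exp (p.1 * Complex.I), p.2)
      (Complex.exp (p.1 * Complex.I) * Complex.I * v.1, v.2) := by
  have h := hu.hasFDerivAt.comp p (hasFDerivAt_boundaryChart p)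
  rw [show bmap u = u ∘ _ from rfl, h.fderiv]
  simp [mul_assoc]

end BoundaryChart

section Jacobians

theorem Dpsi_conj (u : ℝ × ℝ → ℂ) (p : ℝ × ℝ) :
    Dpsi (fun q => conj (u q)) p = conj (Dpsi u p) := by
  simp only [Dpsi, ← Complex.star_def, fderiv_star]
  rfl

theorem Dt_conj (u : ℝ × ℝ → ℂ) (p : ℝ × ℝ) :
    Dt (fun q => conj (u q)) p = conj (Dt u p) := by
  simp only [Dt, ← Complex.star_def, fderiv_star]
  rfl

theorem conj_det2_self_conj (u : ℝ × ℝ → ℂ) (p : ℝ × ℝ) :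
    conj (det2 u (fun q => conj (u q)) p) = -det2 u (fun q => conj (u q)) p := by
  simp only [det2, Dpsi_conj, Dt_conj, map_sub, map_mul, Complex.conj_conj]
  ring

theorem fderiv_apply_eq_wirtinger (f : ℂ → ℂ) (z w : ℂ) :
    fderiv ℝ f z w =
      (fderiv ℝ f z 1 - Complex.I * fderiv ℝ f z Complex.I) / 2 * w + wirDzbar f z * conj w := by
  set L := fderiv ℝ f z
  have hL : L w = w.re * L 1 + w.im * L Complex.I := by
    have hw : w = w.re • (1 : ℂ) + w.im • Complex.I := by simp [Complex.real_smul]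
    conv_lhs => rw [hw, map_add, map_smul, map_smul]
    simp [Complex.real_smul]
  have hconj : conj w = w.re - w.im * Complex.I := by simp [Complex.ext_iff]
  rw [wirDzbar, hL, hconj]
  linear_combination (w.im * L Complex.I) * Complex.I_mul_I -
    (L 1 - Complex.I * L Complex.I) / 2 * (Complex.re_add_im w).symm

theorem det2_comp_self {f : ℂ → ℂ} {u : ℝ × ℝ → ℂ} {p : ℝ × ℝ}
    (hf : DifferentiableAt ℝ f (u p)) (hu : DifferentiableAt ℝ u p) :
    det2 (fun q => f (u q)) u p = -wirDzbar f (u p) * det2 u (fun q => conj (u q)) p := by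
  have hcomp : ∀ v, fderiv ℝ (fun q => f (u q)) p v = fderiv ℝ f (u p) (fderiv ℝ u p v) :=
    fun v => by rw [fderiv_fun_comp p hf hu]; rfl
  rw [det2, det2, Dpsi_conj, Dt_conj]
  simp only [Dpsi, Dt, hcomp]
  rw [fderiv_apply_eq_wirtinger f (u p) (fderiv ℝ u p (1, 0)),
    fderiv_apply_eq_wirtinger f (u p) (fderiv ℝ u p (0, 1))]
  ring

end Jacobians

theorem neg_mul_div_conj_of_conj_eq_neg {D : ℂ} (hD : conj D = -D) (hD0 : D ≠ 0) (c : ℂ) :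
    -c * D / conj (-c * D) = -c / conj c := by
  rw [map_mul, map_neg, hD, neg_mul_neg, mul_div_mul_right _ _ hD0]

section BoundaryJacobian

variable {F G : ℂ × ℝ → ℂ}

theorem Jfun_boundary_eq_det2 (hF : ContDiff ℝ 1 F) (hG : ContDiff ℝ 1 G)
    (hFhol : ∀ t, DifferentiableOn ℂ (fun z => F (z, t)) (Metric.ball 0 1))
    (hGhol : ∀ t, DifferentiableOn ℂ (fun z => G (z, t)) (Metric.ball 0 1)) (p : ℝ × ℝ) :
    Jfun F G (Complex.exp (p.1 * Complex.I), p.2) = det2 (bmap F) (bmap G) p := by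
  have hp : Complex.exp (p.1 * Complex.I) ∈ closure (Metric.ball (0 : ℂ) 1) := by
    rw [closure_ball 0 one_ne_zero, mem_closedBall_zero_iff, Complex.norm_exp_ofReal_mul_I]
  have hlin {u : ℂ × ℝ → ℂ} (hu : ContDiff ℝ 1 u)
      (hhol : ∀ t, DifferentiableOn ℂ (fun z => u (z, t)) (Metric.ball 0 1)) :=
    fderiv_apply_inl_eq_smul_of_mem_closure Metric.isOpen_ball hu hhol hp p.2
  simp only [det2, Dpsi, Dt, fderiv_bmap_apply (hF.differentiable one_ne_zero _),
    fderiv_bmap_apply (hG.differentiable one_ne_zero _)]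
  simp only [Complex.ofReal_one, Complex.ofReal_zero, mul_one, mul_zero]
  rw [hlin hF hFhol, hlin hG hGhol, Jfun, smul_eq_mul, smul_eq_mul]
  ring

theorem Jfun_boundary_eq_neg_wirDzbar_mul_det2 {f : ℂ → ℂ} (hF : ContDiff ℝ 1 F)
    (hG : ContDiff ℝ 1 G) (hf : ContDiff ℝ 1 f)
    (hFhol : ∀ t, DifferentiableOn ℂ (fun z => F (z, t)) (Metric.ball 0 1))
    (hGhol : ∀ t, DifferentiableOn ℂ (fun z => G (z, t)) (Metric.ball 0 1))
    (hFG : ∀ p : ℝ × ℝ, bmap F p = f (bmap G p)) (p : ℝ × ℝ) :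
    Jfun F G (Complex.exp (p.1 * Complex.I), p.2) =
      -wirDzbar f (bmap G p) * det2 (bmap G) (fun q => conj (bmap G q)) p := by
  rw [Jfun_boundary_eq_det2 hF hG hFhol hGhol, show bmap F = fun q => f (bmap G q) from funext hFG]
  exact det2_comp_self (hf.differentiable one_ne_zero _)
    (differentiableAt_bmap (hG.differentiable one_ne_zero _))

end BoundaryJacobian

theorem stmt_11_general (G F : ℂ × ℝ → ℂ) (f : ℂ → ℂ)
    (hG : ContDiff ℝ 1 G) (hF : ContDiff ℝ 1 F) (hf : ContDiff ℝ 1 f)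
    -- holomorphic in ζ on Δ for each t
    (hGhol : ∀ t, DifferentiableOn ℂ (fun z => G (z, t)) (Metric.ball 0 1))
    (hFhol : ∀ t, DifferentiableOn ℂ (fun z => F (z, t)) (Metric.ball 0 1))
    -- F = f ∘ G on bΣ
    (hFG : ∀ p : ℝ × ℝ, bmap F p = f (bmap G p)) :
    -- J equals the Jacobian ∂(F,G)/∂(ψ,t) on bΣ
    (∀ p : ℝ × ℝ, Jfun F G (Complex.exp (p.1 * Complex.I), p.2) = det2 (bmap F) (bmap G) p) ∧
    -- (1)
    (∀ t : ℝ, Jfun F G (0, t) = 0) ∧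
    -- (2)
    (∀ p : ℝ × ℝ, det2 (bmap G) (fun q => (starRingEnd ℂ) (bmap G q)) p = 0 →
      Jfun F G (Complex.exp (p.1 * Complex.I), p.2) = 0) ∧
    -- (3)
    (∀ p : ℝ × ℝ, Jfun F G (Complex.exp (p.1 * Complex.I), p.2) ≠ 0 →
      Jfun F G (Complex.exp (p.1 * Complex.I), p.2) /
          (starRingEnd ℂ) (Jfun F G (Complex.exp (p.1 * Complex.I), p.2)) =
        -(wirDzbar f (bmap G p)) / (starRingEnd ℂ) (wirDzbar f (bmap G p))) := by
  have hJ := Jfun_boundary_eq_neg_wirDzbar_mul_det2 hF hG hf hFhol hGhol hFG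
  refine ⟨Jfun_boundary_eq_det2 hF hG hFhol hGhol, fun t => by simp [Jfun],
    fun p hD => by rw [hJ p, hD, mul_zero], fun p hJ0 => ?_⟩
  have hD0 : det2 (bmap G) (fun q => conj (bmap G q)) p ≠ 0 := fun hD =>
    hJ0 (by rw [hJ p, hD, mul_zero])
  rw [hJ p]
  exact neg_mul_div_conj_of_conj_eq_neg (conj_det2_self_conj _ p) hD0 _

theorem stmt_11 (G F : ℂ × ℝ → ℂ) (f : ℂ → ℂ)
    (hG : ContDiff ℝ 1 G) (hF : ContDiff ℝ 1 F) (hf : ContDiff ℝ 1 f)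
    -- holomorphic in ζ on Δ for each t
    (hGhol : ∀ t, DifferentiableOn ℂ (fun z => G (z, t)) (Metric.ball 0 1))
    (hFhol : ∀ t, DifferentiableOn ℂ (fun z => F (z, t)) (Metric.ball 0 1))
    -- G is (2,2)-regular
    (hreg : Reg22 G)
    -- F = f ∘ G on bΣ
    (hFG : ∀ p : ℝ × ℝ, bmap F p = f (bmap G p)) :
    -- J equals the Jacobian ∂(F,G)/∂(ψ,t) on bΣ
    (∀ p : ℝ × ℝ, Jfun F G (Complex.exp (p.1 * Complex.I), p.2) = det2 (bmap F) (bmap G) p) ∧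
    -- (1)
    (∀ t : ℝ, Jfun F G (0, t) = 0) ∧
    -- (2)
    (∀ p : ℝ × ℝ, det2 (bmap G) (fun q => (starRingEnd ℂ) (bmap G q)) p = 0 →
      Jfun F G (Complex.exp (p.1 * Complex.I), p.2) = 0) ∧
    -- (3)
    (∀ p : ℝ × ℝ, Jfun F G (Complex.exp (p.1 * Complex.I), p.2) ≠ 0 →
      Jfun F G (Complex.exp (p.1 * Complex.I), p.2) /
          (starRingEnd ℂ) (Jfun F G (Complex.exp (p.1 * Complex.I), p.2)) =
        -(wirDzbar f (bmap G p)) / (starRingEnd ℂ) (wirDzbar f (bmap G p))) :=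
  stmt_11_general G F f hG hF hf hGhol hFhol hFG
end
end

section
/- Let M be a 3-manifold with local coordinates t₁, t₂, t₃, let G₁, G₂, F : Δ×M → ℂ be C¹ functions holomorphic in ζ for each fixed t, with G₁, G₂ nonconstant in ζ, and consider the 4×3 Jacobi matrix with columns ∇G₁, ∇G₂, ∇F and rows ∂_ψ, ∂_{t₁}, ∂_{t₂}, ∂_{t₃} (ψ the angular variable, ζ = re^{iψ}). Let J⁰ be the 3×3 minor obtained by deleting the ∂_ψ row and J^k (k = 1,2,3) the minor obtained by deleting the ∂_{t_k} row. If J¹ ≡ J² ≡ J³ ≡ 0 on Δ×M, then J⁰ ≡ 0 on Δ×M. -/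
/-!
Expanding the 4×4 determinant of `[∇G₁, ∇G₁, ∇G₂, ∇F]`, which vanishes because two of its
columns agree, along its first column gives
`∂_ψG₁ · J⁰ = ∂_{t₁}G₁ · J¹ - ∂_{t₂}G₁ · J² + ∂_{t₃}G₁ · J³`, so `∂_ψG₁ · J⁰ ≡ 0`.
For fixed `t`, `∂_ψG₁ = iζ ∂_ζG₁` is holomorphic in `ζ` and not identically zero since `G₁` is
nonconstant, so by the identity theorem it vanishes on no open set; hence the continuous
function `J⁰` vanishes everywhere.
-/

noncomputable section

/-- `∂_ψ = iζ∂_ζ` acting on a function of `(ζ, t) ∈ ℂ × ℝ³` which is holomorphic in `ζ`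
(the complex derivative `∂_ζ` is realized as the real directional derivative in the
direction `1`). -/
def dPsi (u : ℂ × (ℝ × ℝ × ℝ) → ℂ) (p : ℂ × (ℝ × ℝ × ℝ)) : ℂ :=
  Complex.I * p.1 * fderiv ℝ u p (1, 0, 0, 0)

/-- `∂_{t₁}`. -/
def dT1 (u : ℂ × (ℝ × ℝ × ℝ) → ℂ) (p : ℂ × (ℝ × ℝ × ℝ)) : ℂ := fderiv ℝ u p (0, 1, 0, 0)

/-- `∂_{t₂}`. -/
def dT2 (u : ℂ × (ℝ × ℝ × ℝ) → ℂ) (p : ℂ × (ℝ × ℝ × ℝ)) : ℂ := fderiv ℝ u p (0, 0, 1, 0)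

/-- `∂_{t₃}`. -/
def dT3 (u : ℂ × (ℝ × ℝ × ℝ) → ℂ) (p : ℂ × (ℝ × ℝ × ℝ)) : ℂ := fderiv ℝ u p (0, 0, 0, 1)

/-- The 3×3 minor of the 4×3 Jacobi matrix `[∇G₁, ∇G₂, ∇F]` formed by the three rows
`r₁, r₂, r₃` (each row being one of the derivations `∂_ψ, ∂_{t₁}, ∂_{t₂}, ∂_{t₃}`). -/
def minor3 (r₁ r₂ r₃ : (ℂ × (ℝ × ℝ × ℝ) → ℂ) → ℂ × (ℝ × ℝ × ℝ) → ℂ)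
    (G₁ G₂ F : ℂ × (ℝ × ℝ × ℝ) → ℂ) (p : ℂ × (ℝ × ℝ × ℝ)) : ℂ :=
  (!![r₁ G₁ p, r₁ G₂ p, r₁ F p;
      r₂ G₁ p, r₂ G₂ p, r₂ F p;
      r₃ G₁ p, r₃ G₂ p, r₃ F p]).det

theorem minor3_cofactor (r₀ r₁ r₂ r₃ : (ℂ × (ℝ × ℝ × ℝ) → ℂ) → ℂ × (ℝ × ℝ × ℝ) → ℂ)
    (G₁ G₂ F : ℂ × (ℝ × ℝ × ℝ) → ℂ) (p : ℂ × (ℝ × ℝ × ℝ)) :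
    r₀ G₁ p * minor3 r₁ r₂ r₃ G₁ G₂ F p =
      r₁ G₁ p * minor3 r₀ r₂ r₃ G₁ G₂ F p - r₂ G₁ p * minor3 r₀ r₁ r₃ G₁ G₂ F p
        + r₃ G₁ p * minor3 r₀ r₁ r₂ G₁ G₂ F p := by
  simp only [minor3, Matrix.det_fin_three, Matrix.of_apply, Matrix.cons_val', Matrix.cons_val_zero,
    Matrix.cons_val_fin_one, Matrix.cons_val_one, Matrix.cons_val]
  ring

theorem continuousOn_fderiv_apply {𝕜 E F : Type*} [NontriviallyNormedField 𝕜]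
    [NormedAddCommGroup E] [NormedSpace 𝕜 E] [NormedAddCommGroup F] [NormedSpace 𝕜 F]
    {u : E → F} {s : Set E} (hs : IsOpen s) (hu : ContDiffOn 𝕜 1 u s) (v : E) :
    ContinuousOn (fun p => fderiv 𝕜 u p v) s :=
  (hu.continuousOn_fderiv_of_isOpen hs le_rfl).clm_apply continuousOn_const

theorem continuousOn_minor3_dT {G₁ G₂ F : ℂ × (ℝ × ℝ × ℝ) → ℂ} {s : Set (ℂ × (ℝ × ℝ × ℝ))}
    (hs : IsOpen s) (hG₁ : ContDiffOn ℝ 1 G₁ s) (hG₂ : ContDiffOn ℝ 1 G₂ s)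
    (hF : ContDiffOn ℝ 1 F s) :
    ContinuousOn (minor3 dT1 dT2 dT3 G₁ G₂ F) s := by
  have h₁ := continuousOn_fderiv_apply hs hG₁
  have h₂ := continuousOn_fderiv_apply hs hG₂
  have h₃ := continuousOn_fderiv_apply hs hF
  unfold minor3 dT1 dT2 dT3
  simp only [Matrix.det_fin_three, Matrix.of_apply, Matrix.cons_val', Matrix.cons_val_zero,
    Matrix.cons_val_fin_one, Matrix.cons_val_one, Matrix.cons_val]
  fun_prop

theorem fderiv_apply_one_zero_eq_deriv {E : Type*} [NormedAddCommGroup E] [NormedSpace ℝ E]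
    {u : ℂ × E → ℂ} {z : ℂ} {t : E} (hu : DifferentiableAt ℝ u (z, t))
    (hz : DifferentiableAt ℂ (fun w => u (w, t)) z) :
    fderiv ℝ u (z, t) (1, 0) = deriv (fun w => u (w, t)) z := by
  have h := (hu.hasFDerivAt.comp z (hasFDerivAt_prodMk_left z t)).unique
    (hz.hasFDerivAt.restrictScalars ℝ)
  simpa using DFunLike.congr_fun h 1

theorem dPsi_eq_mul_deriv {u : ℂ × (ℝ × ℝ × ℝ) → ℂ} {z : ℂ} {t : ℝ × ℝ × ℝ}
    (hu : DifferentiableAt ℝ u (z, t)) (hz : DifferentiableAt ℂ (fun w => u (w, t)) z) :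
    dPsi u (z, t) = Complex.I * z * deriv (fun w => u (w, t)) z := by
  rw [dPsi, ← fderiv_apply_one_zero_eq_deriv hu hz]
  rfl

theorem eqOn_zero_of_mul_eqOn_zero {𝕜 E : Type*} [NontriviallyNormedField 𝕜]
    [NormedAddCommGroup E] [NormedSpace 𝕜 E] {f J : E → 𝕜} {U : Set E} (hU : IsOpen U)
    (hUc : IsPreconnected U) (hf : AnalyticOnNhd 𝕜 f U) (hf₀ : ¬ Set.EqOn f 0 U)
    (hJ : ContinuousOn J U) (hfJ : ∀ z ∈ U, f z * J z = 0) : Set.EqOn J 0 U := by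
  intro z₀ hz₀
  by_contra hJz₀
  have hJ_ne : ∀ᶠ z in nhds z₀, J z ≠ 0 ∧ z ∈ U :=
    ((hJ.continuousAt (hU.mem_nhds hz₀)).eventually_ne hJz₀).and (hU.eventually_mem hz₀)
  have hf_zero : f =ᶠ[nhds z₀] 0 :=
    hJ_ne.mono fun z ⟨hJz, hz⟩ => (mul_eq_zero.mp (hfJ z hz)).resolve_right hJz
  exact hf₀ (hf.eqOn_zero_of_preconnected_of_eventuallyEq_zero hUc hz₀ hf_zero)

theorem not_eqOn_zero_mul_deriv {g : ℂ → ℂ} (hg : DifferentiableOn ℂ g (Metric.ball 0 1))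
    {z₁ z₂ : ℂ} (hz₁ : z₁ ∈ Metric.ball 0 1) (hz₂ : z₂ ∈ Metric.ball 0 1) (hne : g z₁ ≠ g z₂) :
    ¬ Set.EqOn (fun z => Complex.I * z * deriv g z) 0 (Metric.ball 0 1) := by
  intro h
  have hI : ¬ Set.EqOn (fun z : ℂ => Complex.I * z) 0 (Metric.ball 0 1) := fun hI => by
    simpa using hI (show (2⁻¹ : ℂ) ∈ Metric.ball 0 1 by norm_num)
  have hg' : Set.EqOn (deriv g) 0 (Metric.ball 0 1) :=
    eqOn_zero_of_mul_eqOn_zero Metric.isOpen_ball (convex_ball 0 1).isPreconnected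
      (analyticOnNhd_const.mul analyticOnNhd_id) hI
      ((hg.analyticOnNhd Metric.isOpen_ball).deriv.continuousOn) h
  exact hne (Metric.isOpen_ball.is_const_of_deriv_eq_zero (convex_ball 0 1).isPreconnected hg hg'
    hz₁ hz₂)

theorem stmt_12_general (G₁ G₂ F : ℂ × (ℝ × ℝ × ℝ) → ℂ)
    -- C¹ on Δ × M
    (hG₁ : ContDiffOn ℝ 1 G₁ (Metric.ball (0 : ℂ) 1 ×ˢ Set.univ))
    (hG₂ : ContDiffOn ℝ 1 G₂ (Metric.ball (0 : ℂ) 1 ×ˢ Set.univ))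
    (hF : ContDiffOn ℝ 1 F (Metric.ball (0 : ℂ) 1 ×ˢ Set.univ))
    -- holomorphic in ζ for each fixed t
    (hG₁hol : ∀ t, DifferentiableOn ℂ (fun z => G₁ (z, t)) (Metric.ball 0 1))
    -- G₁, G₂ nonconstant in ζ
    (hG₁nc : ∀ t, ∃ z₁ ∈ Metric.ball (0 : ℂ) 1, ∃ z₂ ∈ Metric.ball (0 : ℂ) 1,
      G₁ (z₁, t) ≠ G₁ (z₂, t))
    -- J¹ ≡ J² ≡ J³ ≡ 0 on Δ × M
    (hJ1 : ∀ p ∈ Metric.ball (0 : ℂ) 1 ×ˢ (Set.univ : Set (ℝ × ℝ × ℝ)),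
      minor3 dPsi dT2 dT3 G₁ G₂ F p = 0)
    (hJ2 : ∀ p ∈ Metric.ball (0 : ℂ) 1 ×ˢ (Set.univ : Set (ℝ × ℝ × ℝ)),
      minor3 dPsi dT1 dT3 G₁ G₂ F p = 0)
    (hJ3 : ∀ p ∈ Metric.ball (0 : ℂ) 1 ×ˢ (Set.univ : Set (ℝ × ℝ × ℝ)),
      minor3 dPsi dT1 dT2 G₁ G₂ F p = 0) :
    -- then J⁰ ≡ 0 on Δ × M
    ∀ p ∈ Metric.ball (0 : ℂ) 1 ×ˢ (Set.univ : Set (ℝ × ℝ × ℝ)),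
      minor3 dT1 dT2 dT3 G₁ G₂ F p = 0 := by
  rintro ⟨z₀, t⟩ ⟨hz₀, -⟩
  have hS : IsOpen (Metric.ball (0 : ℂ) 1 ×ˢ (Set.univ : Set (ℝ × ℝ × ℝ))) :=
    Metric.isOpen_ball.prod isOpen_univ
  have hslice : Set.MapsTo (fun z => (z, t)) (Metric.ball (0 : ℂ) 1)
      (Metric.ball (0 : ℂ) 1 ×ˢ Set.univ) := fun z hz => ⟨hz, trivial⟩
  set g : ℂ → ℂ := fun z => G₁ (z, t)
  have hg : AnalyticOnNhd ℂ g (Metric.ball 0 1) := (hG₁hol t).analyticOnNhd Metric.isOpen_ball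
  have hJ₀ : ∀ z ∈ Metric.ball (0 : ℂ) 1,
      Complex.I * z * deriv g z * minor3 dT1 dT2 dT3 G₁ G₂ F (z, t) = 0 := by
    intro z hz
    have hG₁z : DifferentiableAt ℝ G₁ (z, t) :=
      (hG₁.differentiableOn one_ne_zero).differentiableAt (hS.mem_nhds (hslice hz))
    rw [← dPsi_eq_mul_deriv hG₁z (hg z hz).differentiableAt, minor3_cofactor,
      hJ1 _ (hslice hz), hJ2 _ (hslice hz), hJ3 _ (hslice hz)]
    ring
  obtain ⟨z₁, hz₁, z₂, hz₂, hne⟩ := hG₁nc t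
  exact eqOn_zero_of_mul_eqOn_zero Metric.isOpen_ball (convex_ball 0 1).isPreconnected
    ((analyticOnNhd_const.mul analyticOnNhd_id).mul hg.deriv)
    (not_eqOn_zero_mul_deriv (hG₁hol t) hz₁ hz₂ hne)
    ((continuousOn_minor3_dT hS hG₁ hG₂ hF).comp
      (continuous_id.prodMk continuous_const).continuousOn hslice) hJ₀ hz₀

theorem stmt_12 (G₁ G₂ F : ℂ × (ℝ × ℝ × ℝ) → ℂ)
    -- C¹ on Δ × M
    (hG₁ : ContDiffOn ℝ 1 G₁ (Metric.ball (0 : ℂ) 1 ×ˢ Set.univ))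
    (hG₂ : ContDiffOn ℝ 1 G₂ (Metric.ball (0 : ℂ) 1 ×ˢ Set.univ))
    (hF : ContDiffOn ℝ 1 F (Metric.ball (0 : ℂ) 1 ×ˢ Set.univ))
    -- holomorphic in ζ for each fixed t
    (hG₁hol : ∀ t, DifferentiableOn ℂ (fun z => G₁ (z, t)) (Metric.ball 0 1))
    (hG₂hol : ∀ t, DifferentiableOn ℂ (fun z => G₂ (z, t)) (Metric.ball 0 1))
    (hFhol : ∀ t, DifferentiableOn ℂ (fun z => F (z, t)) (Metric.ball 0 1))
    -- G₁, G₂ nonconstant in ζ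
    (hG₁nc : ∀ t, ∃ z₁ ∈ Metric.ball (0 : ℂ) 1, ∃ z₂ ∈ Metric.ball (0 : ℂ) 1,
      G₁ (z₁, t) ≠ G₁ (z₂, t))
    (hG₂nc : ∀ t, ∃ z₁ ∈ Metric.ball (0 : ℂ) 1, ∃ z₂ ∈ Metric.ball (0 : ℂ) 1,
      G₂ (z₁, t) ≠ G₂ (z₂, t))
    -- J¹ ≡ J² ≡ J³ ≡ 0 on Δ × M
    (hJ1 : ∀ p ∈ Metric.ball (0 : ℂ) 1 ×ˢ (Set.univ : Set (ℝ × ℝ × ℝ)),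
      minor3 dPsi dT2 dT3 G₁ G₂ F p = 0)
    (hJ2 : ∀ p ∈ Metric.ball (0 : ℂ) 1 ×ˢ (Set.univ : Set (ℝ × ℝ × ℝ)),
      minor3 dPsi dT1 dT3 G₁ G₂ F p = 0)
    (hJ3 : ∀ p ∈ Metric.ball (0 : ℂ) 1 ×ˢ (Set.univ : Set (ℝ × ℝ × ℝ)),
      minor3 dPsi dT1 dT2 G₁ G₂ F p = 0) :
    -- then J⁰ ≡ 0 on Δ × M
    ∀ p ∈ Metric.ball (0 : ℂ) 1 ×ˢ (Set.univ : Set (ℝ × ℝ × ℝ)),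
      minor3 dT1 dT2 dT3 G₁ G₂ F p = 0 :=
  stmt_12_general G₁ G₂ F hG₁ hG₂ hF hG₁hol hG₁nc hJ1 hJ2 hJ3

end
end

section
/- Let J : cl(Σ) → ℂ and G : cl(Σ) → ℂⁿ be C¹ (Σ = Δ×M), and let b ∈ ℂⁿ be such that J⁻¹(0) ∩ G⁻¹(b) = ∅ and G⁻¹(b) is a finite union of C¹ curves in cl(Σ) whose endpoints lie on bΣ = ∂Δ×M. Suppose Θ = J/J̄ is G-compatible on bΣ away from zeros of J (Θ = σ ∘ G for some function σ), so that Θ takes equal values at the endpoints of each component of G⁻¹(b). Then Z(b) = (1/2πi) ∫_{G⁻¹(b)} (dJ/J − dJ̄/J̄) is an integer; equivalently, Z(b) = (1/2π) · (total variation of arg Θ along G⁻¹(b)) ∈ ℤ. -/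
/-!
Along each curve `γᵢ` the function `Θ = J / J̄` satisfies the linear equation `Θ' = Θ · ω` with
`ω = J'/J - J̄'/J̄`, so `Θ(γᵢ 1) = exp (∫ ω) · Θ(γᵢ 0)`. Both endpoints of `γᵢ` lie on `bΣ` and in
`G⁻¹(b)`, so compatibility gives `Θ(γᵢ 0) = Θ(γᵢ 1)`; hence `exp (∫ ω) = 1` and each integral
lies in `2πiℤ`.
-/

open Set Complex
open scoped Real ComplexConjugate

theorem eq_exp_integral_mul_of_hasDerivWithinAt {g h : ℝ → ℂ} {a b : ℝ} (hab : a ≤ b)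
    (hh : ContinuousOn h (Icc a b))
    (hg : ∀ x ∈ Icc a b, HasDerivWithinAt g (g x * h x) (Icc a b) x) :
    g b = exp (∫ x in a..b, h x) * g a := by
  set F : ℝ → ℂ := fun u => ∫ x in a..u, h x
  have hF : ∀ x ∈ Icc a b, HasDerivWithinAt F (h x) (Icc a b) x := fun x hx => by
    have := Fact.mk hx
    exact intervalIntegral.integral_hasDerivWithinAt_right
      ((hh.mono (Icc_subset_Icc le_rfl hx.2)).intervalIntegrable_of_Icc hx.1)
      (hh.stronglyMeasurableAtFilter_nhdsWithin measurableSet_Icc x) (hh x hx)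
  -- `exp (-F) * g` is constant on `[a, b]`
  have hconst := constant_of_has_deriv_right_zero (f := fun x => exp (-F x) * g x)
    (fun x hx => ((hF x hx).continuousWithinAt.neg.cexp).mul (hg x hx).continuousWithinAt)
    fun x hx => by
      have hx' := mem_Icc_of_Ico hx
      have hderiv := ((hF x hx').fun_neg.cexp.fun_mul (hg x hx')).mono_of_mem_nhdsWithin
        (Icc_mem_nhdsGE_of_mem hx)
      convert hderiv using 1
      ring
  have hb := hconst b (right_mem_Icc.2 hab)
  simp only [F, intervalIntegral.integral_same, neg_zero, exp_zero, one_mul] at hb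
  rw [← hb, ← mul_assoc, ← exp_add, add_neg_cancel, exp_zero, one_mul]

theorem exists_integral_div_sub_div_eq_int_mul_two_pi_I {f f' g g' : ℝ → ℂ} {a b : ℝ}
    (hab : a ≤ b) (hf : ∀ x ∈ Icc a b, HasDerivWithinAt f (f' x) (Icc a b) x)
    (hg : ∀ x ∈ Icc a b, HasDerivWithinAt g (g' x) (Icc a b) x)
    (hf' : ContinuousOn f' (Icc a b)) (hg' : ContinuousOn g' (Icc a b))
    (hf0 : ∀ x ∈ Icc a b, f x ≠ 0) (hg0 : ∀ x ∈ Icc a b, g x ≠ 0)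
    (hend : f a / g a = f b / g b) :
    ∃ k : ℤ, ∫ x in a..b, (f' x / f x - g' x / g x) = k * (2 * π * I) := by
  have hω : ContinuousOn (fun x => f' x / f x - g' x / g x) (Icc a b) :=
    (hf'.div (fun x hx => (hf x hx).continuousWithinAt) hf0).sub
      (hg'.div (fun x hx => (hg x hx).continuousWithinAt) hg0)
  have hΘ := eq_exp_integral_mul_of_hasDerivWithinAt hab hω (g := fun x => f x / g x)
    fun x hx => ((hf x hx).fun_div (hg x hx) (hg0 x hx)).congr_deriv <| by
      field_simp [hf0 x hx, hg0 x hx]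
  have ha : a ∈ Icc a b := left_mem_Icc.2 hab
  have hΘa : f a / g a ≠ 0 := div_ne_zero (hf0 a ha) (hg0 a ha)
  rw [← hend, eq_comm, mul_eq_right₀ hΘa] at hΘ
  exact exp_eq_one_iff.1 hΘ

theorem exists_integral_logDeriv_sub_conj_eq_int_mul_two_pi_I {f : ℝ → ℂ} {a b : ℝ}
    (hab : a ≤ b) (hf : ContDiff ℝ 1 f) (hf0 : ∀ x ∈ Icc a b, f x ≠ 0)
    (hend : f a / conj (f a) = f b / conj (f b)) :
    ∃ k : ℤ, ∫ x in a..b, (deriv f x / f x - deriv (fun u => conj (f u)) x / conj (f x)) =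
      k * (2 * π * I) := by
  have hf_bar : ContDiff ℝ 1 (fun u => conj (f u)) := conjCLE.contDiff.comp hf
  exact exists_integral_div_sub_div_eq_int_mul_two_pi_I hab
    (fun x _ => ((hf.differentiable one_ne_zero) x).hasDerivAt.hasDerivWithinAt)
    (fun x _ => ((hf_bar.differentiable one_ne_zero) x).hasDerivAt.hasDerivWithinAt)
    (hf.continuous_deriv le_rfl).continuousOn (hf_bar.continuous_deriv le_rfl).continuousOn
    hf0 (fun x hx => (map_ne_zero _).2 (hf0 x hx)) hend

theorem stmt_15_general (n : ℕ) (M : Type*)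
    (J : ℂ × M → ℂ) (G : ℂ × M → EuclideanSpace ℂ (Fin n))
    (b : EuclideanSpace ℂ (Fin n))
    -- J⁻¹(0) ∩ G⁻¹(b) = ∅ (on cl(Σ))
    (hJG : ∀ p : ℂ × M, p.1 ∈ Metric.closedBall (0 : ℂ) 1 → G p = b → J p ≠ 0)
    -- G⁻¹(b) is a finite union of C¹ curves with endpoints on bΣ
    (N : ℕ) (γ : Fin N → ℝ → ℂ × M)
    (hγC1 : ∀ i, ContDiff ℝ 1 (fun s => J (γ i s)))
    (hγend0 : ∀ i, (γ i 0).1 ∈ Metric.sphere (0 : ℂ) 1)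
    (hγend1 : ∀ i, (γ i 1).1 ∈ Metric.sphere (0 : ℂ) 1)
    (hγcover : {p : ℂ × M | p.1 ∈ Metric.closedBall (0 : ℂ) 1 ∧ G p = b} =
      ⋃ i, (γ i) '' Set.Icc 0 1)
    -- Θ = J/J̄ is G-compatible on bΣ away from zeros of J
    (hcompat : ∀ p q : ℂ × M, p.1 ∈ Metric.sphere (0 : ℂ) 1 → q.1 ∈ Metric.sphere (0 : ℂ) 1 →
      J p ≠ 0 → J q ≠ 0 → G p = G q →
      J p / (starRingEnd ℂ) (J p) = J q / (starRingEnd ℂ) (J q)) :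
    ∃ m : ℤ,
      (1 / (2 * Real.pi * Complex.I)) *
        ∑ i : Fin N, ∫ s in (0 : ℝ)..1,
          (deriv (fun u => J (γ i u)) s / J (γ i s) -
            deriv (fun u => (starRingEnd ℂ) (J (γ i u))) s / (starRingEnd ℂ) (J (γ i s))) =
        (m : ℂ) := by
  have hmem : ∀ i, ∀ s ∈ Icc (0 : ℝ) 1,
      γ i s ∈ {p : ℂ × M | p.1 ∈ Metric.closedBall 0 1 ∧ G p = b} :=
    fun i s hs => hγcover ▸ mem_iUnion.2 ⟨i, mem_image_of_mem _ hs⟩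
  have hJ0 : ∀ i, ∀ s ∈ Icc (0 : ℝ) 1, J (γ i s) ≠ 0 :=
    fun i s hs => hJG _ (hmem i s hs).1 (hmem i s hs).2
  have h0 : (0 : ℝ) ∈ Icc 0 1 := left_mem_Icc.2 zero_le_one
  have h1 : (1 : ℝ) ∈ Icc 0 1 := right_mem_Icc.2 zero_le_one
  choose k hk using fun i => exists_integral_logDeriv_sub_conj_eq_int_mul_two_pi_I zero_le_one
    (hγC1 i) (hJ0 i) (hcompat _ _ (hγend0 i) (hγend1 i) (hJ0 i 0 h0) (hJ0 i 1 h1)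
      ((hmem i 0 h0).2.trans (hmem i 1 h1).2.symm))
  refine ⟨∑ i, k i, ?_⟩
  have hpi : 2 * (π : ℂ) * I ≠ 0 := by simp [Real.pi_ne_zero, I_ne_zero]
  rw [Finset.sum_congr rfl fun i _ => hk i, ← Finset.sum_mul]
  push_cast
  field_simp

theorem stmt_15 (n : ℕ) (M : Type*) [TopologicalSpace M] [CompactSpace M]
    (J : ℂ × M → ℂ) (G : ℂ × M → EuclideanSpace ℂ (Fin n))
    (b : EuclideanSpace ℂ (Fin n))
    (hJcont : Continuous J) (hGcont : Continuous G)
    -- J⁻¹(0) ∩ G⁻¹(b) = ∅ (on cl(Σ))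
    (hJG : ∀ p : ℂ × M, p.1 ∈ Metric.closedBall (0 : ℂ) 1 → G p = b → J p ≠ 0)
    -- G⁻¹(b) is a finite union of C¹ curves with endpoints on bΣ
    (N : ℕ) (γ : Fin N → ℝ → ℂ × M)
    (hγcont : ∀ i, ContinuousOn (γ i) (Set.Icc 0 1))
    (hγmem : ∀ i, ∀ s ∈ Set.Icc (0 : ℝ) 1, (γ i s).1 ∈ Metric.closedBall (0 : ℂ) 1)
    (hγC1 : ∀ i, ContDiff ℝ 1 (fun s => J (γ i s)))
    (hγend0 : ∀ i, (γ i 0).1 ∈ Metric.sphere (0 : ℂ) 1)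
    (hγend1 : ∀ i, (γ i 1).1 ∈ Metric.sphere (0 : ℂ) 1)
    (hγcover : {p : ℂ × M | p.1 ∈ Metric.closedBall (0 : ℂ) 1 ∧ G p = b} =
      ⋃ i, (γ i) '' Set.Icc 0 1)
    -- Θ = J/J̄ is G-compatible on bΣ away from zeros of J
    (hcompat : ∀ p q : ℂ × M, p.1 ∈ Metric.sphere (0 : ℂ) 1 → q.1 ∈ Metric.sphere (0 : ℂ) 1 →
      J p ≠ 0 → J q ≠ 0 → G p = G q →
      J p / (starRingEnd ℂ) (J p) = J q / (starRingEnd ℂ) (J q)) :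
    ∃ m : ℤ,
      (1 / (2 * Real.pi * Complex.I)) *
        ∑ i : Fin N, ∫ s in (0 : ℝ)..1,
          (deriv (fun u => J (γ i u)) s / J (γ i s) -
            deriv (fun u => (starRingEnd ℂ) (J (γ i u))) s / (starRingEnd ℂ) (J (γ i s))) =
        (m : ℂ) :=
  stmt_15_general n M J G b hJG N γ hγC1 hγend0 hγend1 hγcover hcompat
end
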